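/- Let A be a local ring and I ⊆ A an ideal. Then for every r ≥ 1 the relative Milnor K-group K^M_r(A,I) and the relative group K̃^M_r(A,I) are each generated by Milnor symbols {a_1, …, a_r} (with all a_j ∈ A^×) such that a_i ∈ K^M_1(A,I) for some 1 ≤ i ≤ r. -/

import Mathlib

noncomputable section

namespace MilnorKTheory

/-- The tensor algebra `T_*(A^×)` over `ℤ` of the unit group of `A` (written additively). -/
abbrev PreK (A : Type*) [CommRing A] : Type _ := TensorAlgebra ℤ (Additive Aˣ)

/-- The element `a₁ ⊗ ⋯ ⊗ a_r` of the tensor algebra `T_*(A^×)`. -/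
def preSymbol {A : Type*} [CommRing A] : List Aˣ → PreK A
  | [] => 1
  | a :: l => TensorAlgebra.ι ℤ (Additive.ofMul a) * preSymbol l

/-- The relation cutting out Kato's Milnor ring: kill every homogeneous element
`a₁ ⊗ ⋯ ⊗ a_s` with `s ≥ 2` such that `a_i + a_j = 1` for some `i ≠ j`. -/
def katoRel (A : Type*) [CommRing A] : PreK A → PreK A → Prop := fun x y =>
  y = 0 ∧ ∃ l : List Aˣ, 2 ≤ l.length ∧
    (∃ i j : ℕ, ∃ hi : i < l.length, ∃ hj : j < l.length,
      i ≠ j ∧ ((l[i]'hi : A) + (l[j]'hj : A) = 1)) ∧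
    x = preSymbol l

/-- The relation cutting out the weak Milnor ring: kill the degree-2 elements
`a₁ ⊗ a₂` with `a₁ + a₂ = 1`. -/
def tildeRel (A : Type*) [CommRing A] : PreK A → PreK A → Prop := fun x y =>
  y = 0 ∧ ∃ a b : Aˣ, ((a : A) + (b : A) = 1) ∧ x = preSymbol [a, b]

/-- The (graded) quotient `T_*(A^×)/(Kato's Steinberg ideal)`, whose degree-`r` part is
Kato's Milnor K-group `K^M_r(A)`. -/
abbrev KRing (A : Type*) [CommRing A] : Type _ := RingQuot (katoRel A)

/-- The (graded) quotient `T_*(A^×)/(a ⊗ b : a + b = 1)`, whose degree-`r` part is the group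
`K̃^M_r(A)`. -/
abbrev TRing (A : Type*) [CommRing A] : Type _ := RingQuot (tildeRel A)

/-- The Milnor symbol `{a₁, …, a_r}` in Kato's Milnor ring. -/
def ksymbol {A : Type*} [CommRing A] (l : List Aˣ) : KRing A :=
  RingQuot.mkRingHom _ (preSymbol l)

/-- The Milnor symbol `{a₁, …, a_r}` in the weak Milnor ring. -/
def tsymbol {A : Type*} [CommRing A] (l : List Aˣ) : TRing A :=
  RingQuot.mkRingHom _ (preSymbol l)

section maps

variable {A B : Type*} [CommRing A] [CommRing B]

/-- The map of tensor algebras induced by a ring homomorphism `A →+* B` via the induced map of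
unit groups. -/
def preMap (φ : A →+* B) : PreK A →ₐ[ℤ] PreK B :=
  TensorAlgebra.lift ℤ ((TensorAlgebra.ι ℤ).comp
    ((MonoidHom.toAdditive (Units.map (φ : A →* B))).toIntLinearMap))

lemma preMap_preSymbol (φ : A →+* B) (l : List Aˣ) :
    preMap φ (preSymbol l) = preSymbol (l.map (Units.map (φ : A →* B))) := by
  induction l with
  | nil => simp [preSymbol]
  | cons a l ih =>
      simp only [preSymbol, map_mul, ih, List.map_cons]
      congr 1
      exact TensorAlgebra.lift_ι_apply _ _

/-- Functoriality of Kato's Milnor ring. -/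
def kmap (φ : A →+* B) : KRing A →+* KRing B :=
  RingQuot.lift ⟨(RingQuot.mkRingHom (katoRel B)).comp (preMap φ).toRingHom, by
    rintro x y ⟨rfl, l, hlen, ⟨i, j, hi, hj, hij, hsum⟩, rfl⟩
    simp only [RingHom.comp_apply, map_zero, AlgHom.toRingHom_eq_coe, RingHom.coe_coe]
    rw [preMap_preSymbol]
    refine (RingQuot.mkRingHom_rel ?_).trans (map_zero _)
    refine ⟨rfl, l.map (Units.map (φ : A →* B)), by simpa using hlen,
      ⟨i, j, by simpa using hi, by simpa using hj, hij, ?_⟩, rfl⟩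
    simp only [List.getElem_map]
    show φ _ + φ _ = 1
    rw [← map_add, hsum, map_one]⟩

/-- Functoriality of the weak Milnor ring. -/
def tmap (φ : A →+* B) : TRing A →+* TRing B :=
  RingQuot.lift ⟨(RingQuot.mkRingHom (tildeRel B)).comp (preMap φ).toRingHom, by
    rintro x y ⟨rfl, a, b, hsum, rfl⟩
    simp only [RingHom.comp_apply, map_zero, AlgHom.toRingHom_eq_coe, RingHom.coe_coe]
    rw [preMap_preSymbol]
    refine (RingQuot.mkRingHom_rel ?_).trans (map_zero _)
    refine ⟨rfl, Units.map (φ : A →* B) a, Units.map (φ : A →* B) b, ?_, rfl⟩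
    show φ _ + φ _ = 1
    rw [← map_add, hsum, map_one]⟩

/-- The canonical map `K̃^M_*(A) → K^M_*(A)`. -/
def tToK (A : Type*) [CommRing A] : TRing A →+* KRing A :=
  RingQuot.lift ⟨RingQuot.mkRingHom (katoRel A), by
    rintro x y ⟨rfl, a, b, hsum, rfl⟩
    rw [map_zero]
    refine (RingQuot.mkRingHom_rel ?_).trans (map_zero _)
    exact ⟨rfl, [a, b], by norm_num,
      ⟨0, 1, by norm_num, by norm_num, by norm_num, by simpa using hsum⟩, rfl⟩⟩

end maps

section groups

variable (A : Type*) [CommRing A]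

/-- The Milnor K-group `K^M_r(A)`: the degree-`r` part of Kato's Milnor ring, i.e. the
additive subgroup generated by the Milnor symbols of length `r`. -/
def KGroup (r : ℕ) : AddSubgroup (KRing A) :=
  AddSubgroup.closure { x | ∃ l : List Aˣ, l.length = r ∧ x = ksymbol l }

/-- The group `K̃^M_r(A)`: the degree-`r` part of the weak Milnor ring. -/
def TGroup (r : ℕ) : AddSubgroup (TRing A) :=
  AddSubgroup.closure { x | ∃ l : List Aˣ, l.length = r ∧ x = tsymbol l }

/-- The relative Milnor K-group `K^M_r(A, I)`: the kernel of
`K^M_r(A) → K^M_r(A/I)`. -/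
def relKGroup (I : Ideal A) (r : ℕ) : AddSubgroup (KRing A) :=
  KGroup A r ⊓ AddMonoidHom.ker (kmap (Ideal.Quotient.mk I)).toAddMonoidHom

/-- The relative group `K̃^M_r(A, I)`: the kernel of `K̃^M_r(A) → K̃^M_r(A/I)`. -/
def relTGroup (I : Ideal A) (r : ℕ) : AddSubgroup (TRing A) :=
  TGroup A r ⊓ AddMonoidHom.ker (tmap (Ideal.Quotient.mk I)).toAddMonoidHom

end groups

end MilnorKTheory

end

/-!
Let `R` be `K^M_*(A)` or `K̃^M_*(A)`, and `J ⊆ R` the two-sided ideal generated by the symbols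
`{u}` with `u ≡ 1 mod I`. As `A` is local, `Aˣ → (A/I)ˣ` is onto, so `u ↦ {u} mod J` descends to
`(A/I)ˣ`; and every defining relation over `A/I` lifts to one over `A` (if `α + β = 1` in `A/I` and
`a` lifts `α`, then `1 - a` is a unit lifting `β`). This gives a ring map `K(A/I) → R/J` through
which `R → R/J` factors, so the kernel of `R → K(A/I)` lies in `J`. All relations are homogeneous,
so `R` is graded (the grading is encoded as a ring map `R → R[X]`), and the degree-`r` part of an
element `∑ x {u} y` of `J` is a sum of symbols of length `r`, each containing the relative entry `u`.
-/

noncomputable section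

lemma AddSubgroup.mul_mem_of_mem_closure {R : Type*} [NonUnitalNonAssocRing R] {S T : Set R}
    {G : AddSubgroup R} (h : ∀ s ∈ S, ∀ t ∈ T, s * t ∈ G) {x y : R}
    (hx : x ∈ AddSubgroup.closure S) (hy : y ∈ AddSubgroup.closure T) : x * y ∈ G := by
  rw [← AddMonoidHom.mulRight_apply, ← AddSubgroup.mem_comap]
  refine (AddSubgroup.closure_le _ |>.2 fun s hs => ?_) hx
  change y ∈ G.comap (AddMonoidHom.mulLeft s)
  exact (AddSubgroup.closure_le _ |>.2 fun t ht => h s hs t ht) hy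

lemma TwoSidedIdeal.ringCon_mk'_eq_zero_iff {R : Type*} [NonAssocRing R]
    (J : TwoSidedIdeal R) {x : R} : J.ringCon.mk' x = 0 ↔ x ∈ J := by
  rw [← TwoSidedIdeal.mem_ker, TwoSidedIdeal.ker_ringCon_mk']

namespace MilnorKTheory

open Polynomial

variable {A : Type*} [CommRing A]

lemma preSymbol_append (l₁ l₂ : List Aˣ) :
    preSymbol (l₁ ++ l₂) = preSymbol l₁ * preSymbol l₂ := by
  induction l₁ with
  | nil => simp [preSymbol]
  | cons a l ih => simp [preSymbol, ih, mul_assoc]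

lemma preSymbol_eq_zero_of_one_mem {l : List Aˣ} (h : 1 ∈ l) : preSymbol l = 0 := by
  obtain ⟨s, t, rfl⟩ := List.append_of_mem h
  simp [preSymbol_append, preSymbol]

section Symbols

variable (rel : PreK A → PreK A → Prop)

def symbol (l : List Aˣ) : RingQuot rel := RingQuot.mkRingHom rel (preSymbol l)

lemma symbol_singleton (u : Aˣ) :
    symbol rel [u] = RingQuot.mkRingHom rel (TensorAlgebra.ι ℤ (Additive.ofMul u)) := by
  simp [symbol, preSymbol]

lemma symbol_append (l₁ l₂ : List Aˣ) :
    symbol rel (l₁ ++ l₂) = symbol rel l₁ * symbol rel l₂ := by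
  simp only [symbol, preSymbol_append, map_mul]

lemma symbol_cons (u : Aˣ) (l : List Aˣ) : symbol rel (u :: l) = symbol rel [u] * symbol rel l :=
  symbol_append rel [u] l

variable {rel} in
lemma symbol_eq_zero_of_rel {l : List Aˣ} (h : rel (preSymbol l) 0) : symbol rel l = 0 := by
  rw [symbol, RingQuot.mkRingHom_rel h, map_zero]

def IsSymbolRel : Prop := ∀ ⦃x y : PreK A⦄, rel x y → y = 0 ∧ ∃ l : List Aˣ, x = preSymbol l

def symbolGroup (p : ℕ) : AddSubgroup (RingQuot rel) :=
  AddSubgroup.closure {x | ∃ l : List Aˣ, l.length = p ∧ x = symbol rel l}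

lemma symbol_mem_symbolGroup {l : List Aˣ} {p : ℕ} (h : l.length = p) :
    symbol rel l ∈ symbolGroup rel p :=
  AddSubgroup.subset_closure ⟨l, h, rfl⟩

lemma symbolGroup_mul {p q : ℕ} {x y : RingQuot rel} (hx : x ∈ symbolGroup rel p)
    (hy : y ∈ symbolGroup rel q) : x * y ∈ symbolGroup rel (p + q) := by
  refine AddSubgroup.mul_mem_of_mem_closure ?_ hx hy
  rintro _ ⟨l₁, rfl, rfl⟩ _ ⟨l₂, rfl, rfl⟩
  exact symbol_append rel l₁ l₂ ▸ symbol_mem_symbolGroup rel (List.length_append ..)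

end Symbols

section Grading

variable (rel : PreK A → PreK A → Prop)

def gradingPre : PreK A →ₐ[ℤ] (RingQuot rel)[X] :=
  TensorAlgebra.lift ℤ
    { toFun u := monomial 1 (RingQuot.mkRingHom rel (TensorAlgebra.ι ℤ u))
      map_add' := by simp
      map_smul' m u := by rw [map_zsmul, map_zsmul, map_zsmul]; rfl }

lemma gradingPre_preSymbol (l : List Aˣ) :
    gradingPre rel (preSymbol l) = monomial l.length (symbol rel l) := by
  induction l with
  | nil => simp [preSymbol, symbol]
  | cons u l ih =>
    rw [preSymbol, map_mul, ih, gradingPre, TensorAlgebra.lift_ι_apply, symbol_cons,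
      symbol_singleton]
    simp [monomial_mul_monomial, add_comm]

variable {rel} (hrel : IsSymbolRel rel)

def grading : RingQuot rel →ₐ[ℤ] (RingQuot rel)[X] :=
  RingQuot.liftAlgHom ℤ ⟨gradingPre rel, fun x y h => by
    obtain ⟨rfl, l, rfl⟩ := hrel h
    rw [gradingPre_preSymbol, symbol_eq_zero_of_rel h, map_zero, map_zero]⟩

lemma grading_mk (x : PreK A) :
    grading hrel (RingQuot.mkRingHom rel x) = gradingPre rel x := by
  rw [← RingQuot.mkAlgHom_coe ℤ]
  exact RingQuot.liftAlgHom_mkAlgHom_apply ℤ _ _ x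

lemma grading_symbol (l : List Aˣ) :
    grading hrel (symbol rel l) = monomial l.length (symbol rel l) := by
  rw [symbol, grading_mk, gradingPre_preSymbol, symbol]

lemma coeff_grading_symbol_mem (l : List Aˣ) (p : ℕ) :
    (grading hrel (symbol rel l)).coeff p ∈ symbolGroup rel p := by
  rw [grading_symbol, coeff_monomial]
  split_ifs with h
  · exact symbol_mem_symbolGroup rel h
  · exact zero_mem _

lemma coeff_grading_mem (x : RingQuot rel) (p : ℕ) :
    (grading hrel x).coeff p ∈ symbolGroup rel p := by
  obtain ⟨x, rfl⟩ := RingQuot.mkRingHom_surjective rel x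
  induction x using TensorAlgebra.induction generalizing p with
  | algebraMap n =>
    rw [Algebra.algebraMap_eq_smul_one, map_zsmul, map_zsmul, coeff_smul]
    exact zsmul_mem (coeff_grading_symbol_mem hrel [] p) n
  | ι u =>
    rw [← ofMul_toMul u, ← symbol_singleton]
    exact coeff_grading_symbol_mem hrel _ p
  | mul x y hx hy =>
    rw [map_mul, map_mul, coeff_mul]
    exact sum_mem fun ij hij =>
      Finset.HasAntidiagonal.mem_antidiagonal.1 hij ▸ symbolGroup_mul rel (hx ij.1) (hy ij.2)
  | add x y hx hy =>
    rw [map_add, map_add, coeff_add]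
    exact add_mem (hx p) (hy p)

lemma coeff_grading_of_mem_symbolGroup {r : ℕ} {x : RingQuot rel}
    (hx : x ∈ symbolGroup rel r) : (grading hrel x).coeff r = x := by
  induction hx using AddSubgroup.closure_induction with
  | mem x hx =>
    obtain ⟨l, rfl, rfl⟩ := hx
    simp [grading_symbol]
  | zero => simp
  | add x y _ _ hx hy => simp [hx, hy]
  | neg x _ hx => simp [hx]

end Grading

section Relative

variable (rel : PreK A → PreK A → Prop) (I : Ideal A)

def relUnitIdeal : TwoSidedIdeal (RingQuot rel) :=
  TwoSidedIdeal.span {x | ∃ u : Aˣ, (u : A) - 1 ∈ I ∧ x = symbol rel [u]}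

def relSymbolGroup (p : ℕ) : AddSubgroup (RingQuot rel) :=
  AddSubgroup.closure
    {x | ∃ l : List Aˣ, l.length = p ∧ (∃ u ∈ l, (u : A) - 1 ∈ I) ∧ x = symbol rel l}

variable {rel I}

lemma symbol_mem_relUnitIdeal {l : List Aˣ} (h : ∃ u ∈ l, (u : A) - 1 ∈ I) :
    symbol rel l ∈ relUnitIdeal rel I := by
  obtain ⟨u, hu, hI⟩ := h
  obtain ⟨s, t, rfl⟩ := List.append_of_mem hu
  rw [symbol_append, symbol_cons]
  exact TwoSidedIdeal.mul_mem_left _ _ _ <| TwoSidedIdeal.mul_mem_right _ _ _ <|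
    TwoSidedIdeal.subset_span ⟨u, hI, rfl⟩

lemma symbolGroup_mul_relSymbolGroup {p q : ℕ} {x y : RingQuot rel}
    (hx : x ∈ symbolGroup rel p) (hy : y ∈ relSymbolGroup rel I q) :
    x * y ∈ relSymbolGroup rel I (p + q) := by
  refine AddSubgroup.mul_mem_of_mem_closure ?_ hx hy
  rintro _ ⟨l₁, rfl, rfl⟩ _ ⟨l₂, rfl, ⟨u, hu, hI⟩, rfl⟩
  exact symbol_append rel l₁ l₂ ▸ AddSubgroup.subset_closure
    ⟨_, List.length_append .., ⟨u, List.mem_append_right _ hu, hI⟩, rfl⟩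

lemma relSymbolGroup_mul_symbolGroup {p q : ℕ} {x y : RingQuot rel}
    (hx : x ∈ relSymbolGroup rel I p) (hy : y ∈ symbolGroup rel q) :
    x * y ∈ relSymbolGroup rel I (p + q) := by
  refine AddSubgroup.mul_mem_of_mem_closure ?_ hx hy
  rintro _ ⟨l₁, rfl, ⟨u, hu, hI⟩, rfl⟩ _ ⟨l₂, rfl, rfl⟩
  exact symbol_append rel l₁ l₂ ▸ AddSubgroup.subset_closure
    ⟨_, List.length_append .., ⟨u, List.mem_append_left _ hu, hI⟩, rfl⟩

variable (hrel : IsSymbolRel rel)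
include hrel

lemma coeff_grading_mem_relSymbolGroup {x : RingQuot rel} (hx : x ∈ relUnitIdeal rel I)
    (p : ℕ) : (grading hrel x).coeff p ∈ relSymbolGroup rel I p := by
  induction hx using TwoSidedIdeal.span_induction generalizing p with
  | mem x hx =>
    obtain ⟨u, hu, rfl⟩ := hx
    rw [grading_symbol, coeff_monomial]
    split_ifs with h
    · exact AddSubgroup.subset_closure ⟨[u], h, ⟨u, List.mem_singleton_self u, hu⟩, rfl⟩
    · exact zero_mem _
  | zero => simp
  | add x y _ _ hx hy => simpa using add_mem (hx p) (hy p)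
  | neg x _ hx => simpa using neg_mem (hx p)
  | left_absorb a x _ hx =>
    rw [map_mul, coeff_mul]
    exact sum_mem fun ij hij => Finset.HasAntidiagonal.mem_antidiagonal.1 hij ▸
      symbolGroup_mul_relSymbolGroup (coeff_grading_mem hrel a ij.1) (hx ij.2)
  | right_absorb b x _ hx =>
    rw [map_mul, coeff_mul]
    exact sum_mem fun ij hij => Finset.HasAntidiagonal.mem_antidiagonal.1 hij ▸
      relSymbolGroup_mul_symbolGroup (hx ij.1) (coeff_grading_mem hrel b ij.2)

lemma mem_relSymbolGroup_of_mem_relUnitIdeal {r : ℕ} {x : RingQuot rel}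
    (hx : x ∈ symbolGroup rel r) (hJ : x ∈ relUnitIdeal rel I) : x ∈ relSymbolGroup rel I r :=
  coeff_grading_of_mem_symbolGroup hrel hx ▸ coeff_grading_mem_relSymbolGroup hrel hJ r

end Relative

section Local

variable [IsLocalRing A] (I : Ideal A)

lemma isLocalHom_quotient_mk_of_ne_top (hI : I ≠ ⊤) : IsLocalHom (Ideal.Quotient.mk I) :=
  isLocalHom_of_le_jacobson_bot I <|
    (IsLocalRing.le_maximalIdeal hI).trans (IsLocalRing.maximalIdeal_le_jacobson ⊥)

lemma units_map_mk_surjective :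
    Function.Surjective (Units.map (Ideal.Quotient.mk I : A →* A ⧸ I)) := by
  by_cases hI : I = ⊤
  · subst hI
    exact fun v => ⟨1, Subsingleton.elim _ _⟩
  · exact IsLocalRing.surjective_units_map_of_local_ringHom _ Ideal.Quotient.mk_surjective <|
      isLocalHom_quotient_mk_of_ne_top I hI

lemma exists_units_lift_add_eq_one (hI : I ≠ ⊤) {α β : (A ⧸ I)ˣ} (h : (α : A ⧸ I) + β = 1) :
    ∃ a b : Aˣ, Units.map (Ideal.Quotient.mk I : A →* A ⧸ I) a = α ∧
      Units.map (Ideal.Quotient.mk I : A →* A ⧸ I) b = β ∧ (a : A) + b = 1 := by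
  have := isLocalHom_quotient_mk_of_ne_top I hI
  obtain ⟨a, rfl⟩ := units_map_mk_surjective I α
  have hb : Ideal.Quotient.mk I (1 - a) = β := by
    rw [map_sub, map_one, ← h]
    simp
  have hunit : IsUnit (1 - (a : A)) := isUnit_of_map_unit (Ideal.Quotient.mk I) _ (hb ▸ β.isUnit)
  exact ⟨a, hunit.unit, rfl, Units.ext hb, by simp⟩

end Local

section Descent

variable (I : Ideal A)

lemma units_map_mk_eq_one_iff {u : Aˣ} :
    Units.map (Ideal.Quotient.mk I : A →* A ⧸ I) u = 1 ↔ (u : A) - 1 ∈ I := by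
  rw [Units.ext_iff, ← Ideal.Quotient.eq]
  simp

def RelationsLift (rel : PreK A → PreK A → Prop)
    (rel' : PreK (A ⧸ I) → PreK (A ⧸ I) → Prop) : Prop :=
  ∀ ⦃x y⦄, rel' x y → y = 0 ∧ ∃ l : List Aˣ,
    x = preSymbol (l.map (Units.map (Ideal.Quotient.mk I : A →* A ⧸ I))) ∧
      symbol rel l ∈ relUnitIdeal rel I

variable [IsLocalRing A] (rel : PreK A → PreK A → Prop)

def unitsDescent : Additive (A ⧸ I)ˣ →+ (relUnitIdeal rel I).ringCon.Quotient :=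
  AddMonoidHom.liftOfSurjective
    (MonoidHom.toAdditive (Units.map (Ideal.Quotient.mk I : A →* A ⧸ I)))
    (units_map_mk_surjective I)
    ⟨(relUnitIdeal rel I).ringCon.mk'.toAddMonoidHom.comp <|
      (RingQuot.mkRingHom rel).toAddMonoidHom.comp (TensorAlgebra.ι ℤ).toAddMonoidHom,
      fun u hu => by
        rw [AddMonoidHom.mem_ker] at hu ⊢
        have hI : (u.toMul : A) - 1 ∈ I := (units_map_mk_eq_one_iff I).1 hu
        have := (TwoSidedIdeal.ringCon_mk'_eq_zero_iff _).2 (symbol_mem_relUnitIdeal (rel := rel)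
          ⟨_, List.mem_singleton_self _, hI⟩)
        rwa [symbol_singleton, ofMul_toMul] at this⟩

lemma unitsDescent_apply (u : Aˣ) :
    unitsDescent I rel (.ofMul (Units.map (Ideal.Quotient.mk I : A →* A ⧸ I) u)) =
      (relUnitIdeal rel I).ringCon.mk' (symbol rel [u]) := by
  rw [symbol_singleton]
  exact AddMonoidHom.liftOfRightInverse_comp_apply _ _ _ _ (Additive.ofMul u)

def descentPre : PreK (A ⧸ I) →ₐ[ℤ] (relUnitIdeal rel I).ringCon.Quotient :=
  TensorAlgebra.lift ℤ (unitsDescent I rel).toIntLinearMap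

lemma descentPre_preMap (x : PreK A) :
    descentPre I rel (preMap (Ideal.Quotient.mk I) x) =
      (relUnitIdeal rel I).ringCon.mk' (RingQuot.mkRingHom rel x) := by
  induction x using TensorAlgebra.induction with
  | algebraMap n => simp
  | ι u =>
    rw [preMap, TensorAlgebra.lift_ι_apply, LinearMap.comp_apply, descentPre]
    exact (TensorAlgebra.lift_ι_apply _ _).trans
      ((unitsDescent_apply I rel u.toMul).trans (by rw [symbol_singleton, ofMul_toMul]))
  | mul x y hx hy => simp only [map_mul, hx, hy]
  | add x y hx hy => simp only [map_add, hx, hy]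

variable {I rel} {rel' : PreK (A ⧸ I) → PreK (A ⧸ I) → Prop}

def descent (hlift : RelationsLift I rel rel') :
    RingQuot rel' →+* (relUnitIdeal rel I).ringCon.Quotient :=
  RingQuot.lift ⟨(descentPre I rel).toRingHom, fun x y h => by
    obtain ⟨rfl, l, rfl, hl⟩ := hlift h
    rw [AlgHom.toRingHom_eq_coe, RingHom.coe_coe, ← preMap_preSymbol, descentPre_preMap,
      map_zero]
    exact (TwoSidedIdeal.ringCon_mk'_eq_zero_iff _).2 hl⟩

lemma mem_relUnitIdeal_of_map_eq_zero (hlift : RelationsLift I rel rel')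
    (ψ : RingQuot rel →+* RingQuot rel')
    (hψ : ∀ x, ψ (RingQuot.mkRingHom rel x) =
      RingQuot.mkRingHom rel' (preMap (Ideal.Quotient.mk I) x))
    {x : RingQuot rel} (hx : ψ x = 0) : x ∈ relUnitIdeal rel I := by
  obtain ⟨x, rfl⟩ := RingQuot.mkRingHom_surjective rel x
  have h := congrArg (descent hlift) hx
  rw [hψ, descent, RingQuot.lift_mkRingHom_apply, map_zero] at h
  rw [← TwoSidedIdeal.ringCon_mk'_eq_zero_iff, ← descentPre_preMap]
  exact h

theorem symbolGroup_inf_ker_eq_relSymbolGroup (hrel : IsSymbolRel rel)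
    (hlift : RelationsLift I rel rel') (ψ : RingQuot rel →+* RingQuot rel')
    (hψ : ∀ x, ψ (RingQuot.mkRingHom rel x) =
      RingQuot.mkRingHom rel' (preMap (Ideal.Quotient.mk I) x)) (r : ℕ) :
    symbolGroup rel r ⊓ ψ.toAddMonoidHom.ker = relSymbolGroup rel I r := by
  refine le_antisymm (fun x ⟨hx, hψx⟩ => mem_relSymbolGroup_of_mem_relUnitIdeal hrel hx
    (mem_relUnitIdeal_of_map_eq_zero hlift ψ hψ hψx)) ?_
  rw [relSymbolGroup, AddSubgroup.closure_le]
  rintro _ ⟨l, rfl, ⟨u, hu, hI⟩, rfl⟩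
  refine ⟨symbol_mem_symbolGroup rel rfl, ?_⟩
  change ψ (symbol rel l) = 0
  rw [symbol, hψ, preMap_preSymbol, preSymbol_eq_zero_of_one_mem, map_zero]
  exact List.mem_map.2 ⟨u, hu, (units_map_mk_eq_one_iff I).2 hI⟩

end Descent

section Instances

lemma isSymbolRel_katoRel : IsSymbolRel (katoRel A) := by
  rintro x y ⟨rfl, l, -, -, rfl⟩
  exact ⟨rfl, l, rfl⟩

lemma isSymbolRel_tildeRel : IsSymbolRel (tildeRel A) := by
  rintro x y ⟨rfl, a, b, -, rfl⟩
  exact ⟨rfl, [a, b], rfl⟩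

variable [IsLocalRing A] (I : Ideal A)

lemma map_units_map_mk_surjInv (l : List (A ⧸ I)ˣ) :
    (l.map (Function.surjInv (units_map_mk_surjective I))).map
      (Units.map (Ideal.Quotient.mk I : A →* A ⧸ I)) = l := by
  simp

lemma relationsLift_katoRel : RelationsLift I (katoRel A) (katoRel (A ⧸ I)) := by
  rintro x y ⟨rfl, l, hlen, ⟨i, j, hi, hj, hij, hsum⟩, rfl⟩
  refine ⟨rfl, ?_⟩
  set σ := Function.surjInv (units_map_mk_surjective I)
  by_cases hI : I = ⊤
  · subst hI
    exact ⟨l.map σ, by rw [map_units_map_mk_surjInv],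
      symbol_mem_relUnitIdeal ⟨_, List.mem_map_of_mem (List.getElem_mem (by omega : 0 < l.length)),
        trivial⟩⟩
  · obtain ⟨a, b, ha, hb, hab⟩ := exists_units_lift_add_eq_one I hI hsum
    refine ⟨((l.map σ).set i a).set j b, ?_, ?_⟩
    · rw [List.map_set, List.map_set, map_units_map_mk_surjInv, ha, hb, List.set_getElem_self,
        List.set_getElem_self]
    · rw [symbol_eq_zero_of_rel ⟨rfl, _, by simpa using hlen, ⟨i, j, by simpa using hi,
        by simpa using hj, hij, by simpa [List.getElem_set, hij, Ne.symm hij] using hab⟩, rfl⟩]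
      exact zero_mem _

lemma relationsLift_tildeRel : RelationsLift I (tildeRel A) (tildeRel (A ⧸ I)) := by
  rintro x y ⟨rfl, α, β, hsum, rfl⟩
  refine ⟨rfl, ?_⟩
  by_cases hI : I = ⊤
  · subst hI
    set σ := Function.surjInv (units_map_mk_surjective (⊤ : Ideal A))
    exact ⟨[α, β].map σ, by rw [map_units_map_mk_surjInv],
      symbol_mem_relUnitIdeal ⟨σ α, by simp, trivial⟩⟩
  · obtain ⟨a, b, ha, hb, hab⟩ := exists_units_lift_add_eq_one I hI hsum
    refine ⟨[a, b], by simp [ha, hb], ?_⟩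
    rw [symbol_eq_zero_of_rel ⟨rfl, a, b, hab, rfl⟩]
    exact zero_mem _

end Instances

end MilnorKTheory

end

open MilnorKTheory in
theorem relMilnor_generated_by_relative_symbols_general
    (A : Type*) [CommRing A] [IsLocalRing A] (I : Ideal A) (r : ℕ) :
    relKGroup A I r = AddSubgroup.closure
      { x | ∃ l : List Aˣ, l.length = r ∧
          (∃ i : ℕ, ∃ hi : i < l.length, ((l[i]'hi : A) - 1) ∈ I) ∧ x = ksymbol l } ∧
    relTGroup A I r = AddSubgroup.closure
      { x | ∃ l : List Aˣ, l.length = r ∧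
          (∃ i : ℕ, ∃ hi : i < l.length, ((l[i]'hi : A) - 1) ∈ I) ∧ x = tsymbol l } := by
  have hexists (l : List Aˣ) : (∃ i, ∃ hi : i < l.length, ((l[i]'hi : A) - 1) ∈ I) ↔
      ∃ u ∈ l, (u : A) - 1 ∈ I :=
    (List.exists_mem_iff_getElem (p := fun u : Aˣ => (u : A) - 1 ∈ I)).symm
  simp only [hexists]
  exact ⟨symbolGroup_inf_ker_eq_relSymbolGroup isSymbolRel_katoRel (relationsLift_katoRel I)
      _ (fun x => RingQuot.lift_mkRingHom_apply _ _ x) r,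
    symbolGroup_inf_ker_eq_relSymbolGroup isSymbolRel_tildeRel (relationsLift_tildeRel I)
      _ (fun x => RingQuot.lift_mkRingHom_apply _ _ x) r⟩

open MilnorKTheory in
/-- Let `A` be a local ring and `I ⊆ A` an ideal.  Then for every `r ≥ 1` the
relative Milnor K-group `K^M_r(A,I)` and the relative group `K̃^M_r(A,I)` are each generated by
Milnor symbols `{a₁, …, a_r}` (with all `a_j ∈ A^×`) such that `a_i ∈ K^M_1(A,I)` (i.e. the
unit `a_i` is congruent to `1` modulo `I`) for some `1 ≤ i ≤ r`. -/
theorem relMilnor_generated_by_relative_symbols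
    (A : Type*) [CommRing A] [IsLocalRing A] (I : Ideal A) (r : ℕ) (hr : 1 ≤ r) :
    relKGroup A I r = AddSubgroup.closure
      { x | ∃ l : List Aˣ, l.length = r ∧
          (∃ i : ℕ, ∃ hi : i < l.length, ((l[i]'hi : A) - 1) ∈ I) ∧ x = ksymbol l } ∧
    relTGroup A I r = AddSubgroup.closure
      { x | ∃ l : List Aˣ, l.length = r ∧
          (∃ i : ℕ, ∃ hi : i < l.length, ((l[i]'hi : A) - 1) ∈ I) ∧ x = tsymbol l } :=
  relMilnor_generated_by_relative_symbols_general A I r
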